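/- Let (B_1,B_2,a,b) be a stable handsaw quiver datum satisfying the moment map equation μ = 0. Then for every 1 ≤ i ≤ n−1 and every z ∈ ℂ, the kernel of α_i|_z has dimension dim W_1 + dim W_2 + ⋯ + dim W_i. -/
import Mathlib


noncomputable section

open LinearMap Module

/-- The chain `B_{1,i-1} ∘ ⋯ ∘ B_{1,j} ∘ a_j : W_j → V_i` (zero/junk when out of range). -/
def AtoV {V W : ℕ → Type*}
    [∀ i, AddCommGroup (V i)] [∀ i, Module ℂ (V i)]
    [∀ i, AddCommGroup (W i)] [∀ i, Module ℂ (W i)]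
    (B1 : ∀ i, V i →ₗ[ℂ] V (i + 1)) (a : ∀ i, W i →ₗ[ℂ] V i) :
    (i j : ℕ) → (W j →ₗ[ℂ] V i)
  | 0, _ => 0
  | i + 1, j =>
    if h : j = i + 1 then cast (by rw [h]) (a j)
    else (B1 i) ∘ₗ (AtoV B1 a i j)

/-- The map `α_i|_z : W_1 ⊕ ⋯ ⊕ W_i ⊕ V_i → V_i`, whose restriction to `W_j` (`j ≤ i`) is
`B_{1,i-1} ∘ ⋯ ∘ B_{1,j} ∘ a_j` and whose restriction to `V_i` is `z·id − B_{2,i}`. -/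
def alphaMap {V W : ℕ → Type*}
    [∀ i, AddCommGroup (V i)] [∀ i, Module ℂ (V i)]
    [∀ i, AddCommGroup (W i)] [∀ i, Module ℂ (W i)]
    (B1 : ∀ i, V i →ₗ[ℂ] V (i + 1)) (B2 : ∀ i, V i →ₗ[ℂ] V i)
    (a : ∀ i, W i →ₗ[ℂ] V i) (i : ℕ) (z : ℂ) :
    ((∀ j : Fin i, W (j.val + 1)) × V i) →ₗ[ℂ] V i :=
  LinearMap.coprod
    (∑ j : Fin i, (AtoV B1 a i (j.val + 1)) ∘ₗ (LinearMap.proj j))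
    (z • LinearMap.id - B2 i)

/-- The map `β_i : W_1 ⊕ ⋯ ⊕ W_i ⊕ V_i → W_1 ⊕ ⋯ ⊕ W_{i+1} ⊕ V_{i+1}`, the identity on each
`W_j` (`j ≤ i`) and `(b_i, B_{1,i})` on `V_i`. -/
def betaMap {V W : ℕ → Type*}
    [∀ i, AddCommGroup (V i)] [∀ i, Module ℂ (V i)]
    [∀ i, AddCommGroup (W i)] [∀ i, Module ℂ (W i)]
    (B1 : ∀ i, V i →ₗ[ℂ] V (i + 1)) (b : ∀ i, V i →ₗ[ℂ] W (i + 1)) (i : ℕ) :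
    ((∀ j : Fin i, W (j.val + 1)) × V i) →ₗ[ℂ]
      ((∀ j : Fin (i + 1), W (j.val + 1)) × V (i + 1)) :=
  LinearMap.prod
    (LinearMap.pi fun j' : Fin (i + 1) =>
      if h : j'.val < i then
        (LinearMap.proj (⟨j'.val, h⟩ : Fin i)) ∘ₗ (LinearMap.fst ℂ _ _)
      else
        cast (by
          have hj : j'.val = i := le_antisymm (Nat.lt_succ_iff.mp j'.isLt) (not_lt.mp h)
          rw [hj]) ((b i) ∘ₗ (LinearMap.snd ℂ (∀ j : Fin i, W (j.val + 1)) (V i))))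
    ((B1 i) ∘ₗ (LinearMap.snd ℂ _ _))

/-- The moment map equation μ = 0. -/
def MomentZero {V W : ℕ → Type*}
    [∀ i, AddCommGroup (V i)] [∀ i, Module ℂ (V i)]
    [∀ i, AddCommGroup (W i)] [∀ i, Module ℂ (W i)]
    (n : ℕ)
    (B1 : ∀ i, V i →ₗ[ℂ] V (i + 1)) (B2 : ∀ i, V i →ₗ[ℂ] V i)
    (a : ∀ i, W i →ₗ[ℂ] V i) (b : ∀ i, V i →ₗ[ℂ] W (i + 1)) : Prop :=
  ∀ i, 1 ≤ i → i ≤ n - 2 →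
    (B1 i) ∘ₗ (B2 i) - (B2 (i + 1)) ∘ₗ (B1 i) + (a (i + 1)) ∘ₗ (b i) = 0

/-- Stability of a handsaw quiver datum. -/
def IsStable {V W : ℕ → Type*}
    [∀ i, AddCommGroup (V i)] [∀ i, Module ℂ (V i)]
    [∀ i, AddCommGroup (W i)] [∀ i, Module ℂ (W i)]
    (n : ℕ)
    (B1 : ∀ i, V i →ₗ[ℂ] V (i + 1)) (B2 : ∀ i, V i →ₗ[ℂ] V i)
    (a : ∀ i, W i →ₗ[ℂ] V i) : Prop :=
  ∀ S : ∀ i, Submodule ℂ (V i),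
    (∀ i, 1 ≤ i → i ≤ n - 2 → (S i).map (B1 i) ≤ S (i + 1)) →
    (∀ i, 1 ≤ i → i ≤ n - 1 → (S i).map (B2 i) ≤ S i) →
    (∀ i, 1 ≤ i → i ≤ n - 1 → LinearMap.range (a i) ≤ S i) →
    ∀ i, 1 ≤ i → i ≤ n - 1 → S i = ⊤

/-- Costability of a handsaw quiver datum. -/
def IsCostable {V W : ℕ → Type*}
    [∀ i, AddCommGroup (V i)] [∀ i, Module ℂ (V i)]
    [∀ i, AddCommGroup (W i)] [∀ i, Module ℂ (W i)]
    (n : ℕ)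
    (B1 : ∀ i, V i →ₗ[ℂ] V (i + 1)) (B2 : ∀ i, V i →ₗ[ℂ] V i)
    (b : ∀ i, V i →ₗ[ℂ] W (i + 1)) : Prop :=
  ∀ S : ∀ i, Submodule ℂ (V i),
    (∀ i, 1 ≤ i → i ≤ n - 2 → (S i).map (B1 i) ≤ S (i + 1)) →
    (∀ i, 1 ≤ i → i ≤ n - 1 → (S i).map (B2 i) ≤ S i) →
    (∀ i, 1 ≤ i → i ≤ n - 1 → S i ≤ LinearMap.ker (b i)) →
    ∀ i, 1 ≤ i → i ≤ n - 1 → S i = ⊥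

section Aux
variable {V W : ℕ → Type*}
    [∀ i, AddCommGroup (V i)] [∀ i, Module ℂ (V i)]
    [∀ i, AddCommGroup (W i)] [∀ i, Module ℂ (W i)]
    (B1 : ∀ i, V i →ₗ[ℂ] V (i + 1)) (a : ∀ i, W i →ₗ[ℂ] V i)

lemma AtoV_succ_of_ne (k j : ℕ) (h : j ≠ k + 1) :
    AtoV B1 a (k + 1) j = (B1 k) ∘ₗ (AtoV B1 a k j) := by
  simp [AtoV, h]

lemma AtoV_self (k : ℕ) : AtoV B1 a (k + 1) (k + 1) = a (k + 1) := by
  simp [AtoV]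
end Aux

theorem finrank_ker_alpha (n : ℕ) (hn : 2 ≤ n) (V W : ℕ → Type*)
    [∀ i, AddCommGroup (V i)] [∀ i, Module ℂ (V i)] [∀ i, FiniteDimensional ℂ (V i)]
    [∀ i, AddCommGroup (W i)] [∀ i, Module ℂ (W i)] [∀ i, FiniteDimensional ℂ (W i)]
    (B1 : ∀ i, V i →ₗ[ℂ] V (i + 1)) (B2 : ∀ i, V i →ₗ[ℂ] V i)
    (a : ∀ i, W i →ₗ[ℂ] V i) (b : ∀ i, V i →ₗ[ℂ] W (i + 1))
    (hstable : IsStable n B1 B2 a)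
    (hmu : MomentZero n B1 B2 a b) :
    ∀ i, 1 ≤ i → i ≤ n - 1 → ∀ z : ℂ,
      Module.finrank ℂ ↥(LinearMap.ker (alphaMap B1 B2 a i z)) =
        ∑ j ∈ Finset.Icc 1 i, Module.finrank ℂ (W j) := by
  intro i hi1 hi2 z
  classical
  -- the candidate family of submodules
  set T : ∀ k, Submodule ℂ (V k) := fun k =>
    (⨆ j ∈ Finset.Icc 1 k, LinearMap.range (AtoV B1 a k j)) ⊔
      LinearMap.range (z • (LinearMap.id : V k →ₗ[ℂ] V k) - B2 k) with hTdef
  have hTtop : ∀ k, 1 ≤ k → k ≤ n - 1 → T k = ⊤ := by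
    apply hstable T
    · -- B1 invariance
      intro k hk1 hk2
      rw [Submodule.map_le_iff_le_comap]
      apply sup_le
      · apply iSup₂_le
        intro j hj
        rintro x ⟨w, rfl⟩
        simp only [Submodule.mem_comap]
        have hne : j ≠ k + 1 := by
          have := (Finset.mem_Icc.mp hj).2
          omega
        have hAS : B1 k (AtoV B1 a k j w) = AtoV B1 a (k + 1) j w := by
          rw [AtoV_succ_of_ne B1 a k j hne]; rfl
        rw [hAS]
        apply Submodule.mem_sup_left
        have hjm : j ∈ Finset.Icc 1 (k + 1) := by
          rw [Finset.mem_Icc] at hj ⊢; omega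
        exact Submodule.mem_iSup_of_mem j (Submodule.mem_iSup_of_mem hjm ⟨w, rfl⟩)
      · rintro x ⟨v, rfl⟩
        simp only [Submodule.mem_comap]
        have hmom : B1 k ((z • (LinearMap.id : V k →ₗ[ℂ] V k) - B2 k) v) =
            (z • (LinearMap.id : V (k+1) →ₗ[ℂ] V (k+1)) - B2 (k + 1)) (B1 k v)
              + a (k + 1) (b k v) := by
          have h0 := LinearMap.congr_fun (hmu k hk1 hk2) v
          simp only [LinearMap.add_apply, LinearMap.sub_apply, LinearMap.comp_apply,
            LinearMap.zero_apply, LinearMap.smul_apply, LinearMap.id_apply] at h0 ⊢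
          rw [map_sub, map_smul]
          have key : z • (B1 k) v - (B1 k) ((B2 k) v) -
              (z • (B1 k) v - (B2 (k + 1)) ((B1 k) v) + (a (k + 1)) ((b k) v)) =
              -((B1 k) ((B2 k) v) - (B2 (k + 1)) ((B1 k) v) + (a (k + 1)) ((b k) v)) := by
            abel
          rw [← sub_eq_zero, key, h0, neg_zero]
        rw [hmom]
        apply Submodule.add_mem
        · exact Submodule.mem_sup_right ⟨B1 k v, rfl⟩
        · apply Submodule.mem_sup_left
          have hjm : k + 1 ∈ Finset.Icc 1 (k + 1) := by
            rw [Finset.mem_Icc]; omega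
          have : a (k + 1) (b k v) = AtoV B1 a (k + 1) (k + 1) (b k v) := by
            rw [AtoV_self]
          rw [this]
          exact Submodule.mem_iSup_of_mem (k+1) (Submodule.mem_iSup_of_mem hjm ⟨b k v, rfl⟩)
    · -- B2 invariance
      intro k _ _
      rintro x ⟨y, hy, rfl⟩
      have : B2 k y = z • y - (z • (LinearMap.id : V k →ₗ[ℂ] V k) - B2 k) y := by
        simp
      rw [this]
      exact Submodule.sub_mem _ (Submodule.smul_mem _ _ hy)
        (Submodule.mem_sup_right ⟨y, rfl⟩)
    · -- range a
      intro k hk1 _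
      obtain ⟨m, rfl⟩ : ∃ m, k = m + 1 := ⟨k - 1, by omega⟩
      rintro x ⟨w, rfl⟩
      apply Submodule.mem_sup_left
      have hjm : m + 1 ∈ Finset.Icc 1 (m + 1) := by rw [Finset.mem_Icc]; omega
      have : a (m + 1) w = AtoV B1 a (m + 1) (m + 1) w := by rw [AtoV_self]
      rw [this]
      exact Submodule.mem_iSup_of_mem (m+1) (Submodule.mem_iSup_of_mem hjm ⟨w, rfl⟩)
  -- surjectivity of alphaMap
  have hsurj : LinearMap.range (alphaMap B1 B2 a i z) = ⊤ := by
    rw [eq_top_iff, ← hTtop i hi1 hi2, hTdef]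
    apply sup_le
    · apply iSup₂_le
      intro j hj
      rintro x ⟨w, rfl⟩
      rw [Finset.mem_Icc] at hj
      obtain ⟨m, rfl⟩ : ∃ m, j = m + 1 := ⟨j - 1, by omega⟩
      have hm : m < i := by omega
      refine ⟨(Pi.single (⟨m, hm⟩ : Fin i) w, 0), ?_⟩
      simp only [alphaMap, LinearMap.coprod_apply, LinearMap.sum_apply,
        LinearMap.comp_apply, LinearMap.proj_apply, map_zero, add_zero]
      rw [Finset.sum_eq_single (⟨m, hm⟩ : Fin i)]
      · simp
      · intro j' _ hne
        rw [Pi.single_eq_of_ne hne, map_zero]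
      · simp
    · rintro x ⟨v, rfl⟩
      refine ⟨(0, v), ?_⟩
      simp [alphaMap]
  -- rank-nullity
  have hrank := LinearMap.finrank_range_add_finrank_ker (alphaMap B1 B2 a i z)
  rw [hsurj, finrank_top] at hrank
  have hdom : Module.finrank ℂ ((∀ j : Fin i, W (j.val + 1)) × V i) =
      (∑ j ∈ Finset.Icc 1 i, Module.finrank ℂ (W j)) + Module.finrank ℂ (V i) := by
    rw [Module.finrank_prod, Module.finrank_pi_fintype]
    congr 1
    rw [Fin.sum_univ_eq_sum_range (fun j => Module.finrank ℂ (W (j + 1))),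
      ← Finset.Ico_add_one_right_eq_Icc, Finset.sum_Ico_eq_sum_range]
    exact Finset.sum_congr rfl fun x _ => by rw [add_comm]
  rw [hdom] at hrank
  omega

end
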